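/- (Convergence of R-ProxSGD.) Let (Ω, 𝓕, P) be a probability space, T ≥ 1 an integer, X₀ ∈ St(d,r) deterministic, and let (X_t)_{t=0}^{T}, (v_t)_{t=0}^{T−1}, (ζ_t)_{t=0}^{T−1} be random matrices in ℝ^{d×r} such that, almost surely for every 0 ≤ t ≤ T−1: X_t ∈ St(d,r); ζ_t ∈ T_{X_t} is the minimizer over T_{X_t} of ζ ↦ ⟨v_t, ζ⟩ + (1/(2γ))‖ζ‖² + h(X_t + ζ); X_{t+1} = Retr_{X_t}(ηζ_t); f(X_{t+1}) ≤ f(X_t) + η⟨∇f(X_t), ζ_t⟩ + (L_R η²/2)‖ζ_t‖²; ‖X_{t+1} − (X_t + ηζ_t)‖ ≤ M₂ η² ‖ζ_t‖²; and ‖Retr_{X_t}(χ) − X_t‖ ≤ M₁‖χ‖ for all χ ∈ T_{X_t}, where Retr is the polar retraction. Assume η ∈ (0,1], γ = 2η/(2L̃η² + η + 1) with L̃ = L_R/2 + L_h M₂, L_R, L_h, M₁, M₂ > 0, σ ≥ 0, s > 0, h : ℝ^{d×r} → ℝ is convex and L_h-Lipschitz, f : ℝ^{d×r} → ℝ is differentiable,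 F = f + h satisfies F(X) ≥ F* for all X ∈ St(d,r), Δ₀ = F(X₀) − F*, all the indicated expectations are finite, and E[‖v_t − ∇f(X_t)‖²] ≤ σ²/s for every t. For each t let ξ_t be the minimizer over T_{X_t} of ξ ↦ ⟨∇f(X_t), ξ⟩ + (1/(2γ))‖ξ‖² + h(X_t + ξ), and set G_t = (X_t − Retr_{X_t}(γξ_t))/γ. Then (1/T)∑_{t=0}^{T−1} E[‖G_t‖²] ≤ 14M₁²(2Δ₀/(Tη) + σ²η/s) + 8M₁²γσ²/s. -/

import Mathlib

open Matrix MeasureTheory Finset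

noncomputable section

/-- The space of real `d × r` matrices. -/
abbrev Mat (d r : ℕ) := Matrix (Fin d) (Fin r) ℝ

/-- The Frobenius inner product `⟨A, B⟩ = tr(Aᵀ B)`. -/
def finner {d r : ℕ} (A B : Mat d r) : ℝ := (Aᵀ * B).trace

/-- The Stiefel manifold `St(d,r) = {X : Xᵀ X = I}`. -/
def Stiefel {d r : ℕ} (X : Mat d r) : Prop := Xᵀ * X = 1

/-- The tangent space to the Stiefel manifold at `X`:
`T_X = {ζ : ζᵀ X + Xᵀ ζ = 0}`. -/
def TangentAt {d r : ℕ} (X : Mat d r) : Set (Mat d r) :=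
  {ζ | ζᵀ * X + Xᵀ * ζ = 0}

lemma posSemidef_one_add_transpose_mul_self {d r : ℕ} (ξ : Mat d r) :
    (1 + ξᵀ * ξ).PosSemidef := by
  have h := Matrix.posSemidef_conjTranspose_mul_self ξ
  rw [Matrix.conjTranspose_eq_transpose_of_trivial] at h
  exact Matrix.PosSemidef.one.add h

/-- The positive semidefinite square root of a positive semidefinite matrix
(the definition of `Matrix.PosSemidef.sqrt` in the older Mathlib). -/
def psdSqrt {m : ℕ} {A : Matrix (Fin m) (Fin m) ℝ} (hA : A.PosSemidef) :
    Matrix (Fin m) (Fin m) ℝ :=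
  hA.1.eigenvectorUnitary.1 * diagonal ((↑) ∘ (√·) ∘ hA.1.eigenvalues) *
  (star hA.1.eigenvectorUnitary : Matrix (Fin m) (Fin m) ℝ)

/-- The polar retraction `Retr_X(ξ) = (X + ξ)(I + ξᵀ ξ)^{-1/2}`, where the square root
is the unique positive-semidefinite (here positive-definite) square root. -/
def polarRetr {d r : ℕ} (X ξ : Mat d r) : Mat d r :=
  (X + ξ) * (psdSqrt (posSemidef_one_add_transpose_mul_self ξ))⁻¹
lemma psdSqrt_mul_self {m : ℕ} {A : Matrix (Fin m) (Fin m) ℝ} (hA : A.PosSemidef) :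
    psdSqrt hA * psdSqrt hA = A := by
  have hspec := hA.1.spectral_theorem
  rw [Unitary.conjStarAlgAut_apply] at hspec
  have hU : (star hA.1.eigenvectorUnitary : Matrix (Fin m) (Fin m) ℝ) * hA.1.eigenvectorUnitary.1 = 1 :=
    Unitary.star_mul_self_of_mem hA.1.eigenvectorUnitary.2
  unfold psdSqrt
  conv_rhs => rw [hspec]
  simp only [Matrix.mul_assoc]
  rw [← Matrix.mul_assoc (star _), hU, Matrix.one_mul, ← Matrix.mul_assoc (diagonal _),
    diagonal_mul_diagonal]
  congr 3
  funext i
  simp only [Function.comp]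
  exact Real.mul_self_sqrt (hA.eigenvalues_nonneg i)
lemma psdSqrt_transpose {m : ℕ} {A : Matrix (Fin m) (Fin m) ℝ} (hA : A.PosSemidef) :
    (psdSqrt hA)ᵀ = psdSqrt hA := by
  unfold psdSqrt
  rw [Matrix.transpose_mul, Matrix.transpose_mul, diagonal_transpose]
  have h1 : (star hA.1.eigenvectorUnitary : Matrix (Fin m) (Fin m) ℝ)ᵀ = hA.1.eigenvectorUnitary.1 := by
    rw [star_eq_conjTranspose, conjTranspose_eq_transpose_of_trivial, transpose_transpose]
  have h2 : (hA.1.eigenvectorUnitary.1)ᵀ = (star hA.1.eigenvectorUnitary : Matrix (Fin m) (Fin m) ℝ) := by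
    rw [star_eq_conjTranspose, conjTranspose_eq_transpose_of_trivial]
  rw [h1, h2, Matrix.mul_assoc]

/- Equip matrices with the Frobenius norm (the norm induced by `finner`). -/
attribute [local instance] Matrix.frobeniusNormedAddCommGroup Matrix.frobeniusNormedSpace

/-- The subproblem objective `φ(ζ) = ⟨v, ζ⟩ + (1/(2γ))‖ζ‖² + h(X + ζ)`. -/
def phi {d r : ℕ} (γ : ℝ) (h : Mat d r → ℝ) (X v ζ : Mat d r) : ℝ :=
  finner v ζ + (1 / (2 * γ)) * ‖ζ‖ ^ 2 + h (X + ζ)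

/-- `ζ` is a minimizer of `phi γ h X v` over the tangent space at `X`. -/
def IsSubMin {d r : ℕ} (γ : ℝ) (h : Mat d r → ℝ) (X v ζ : Mat d r) : Prop :=
  ζ ∈ TangentAt X ∧ ∀ ζ' ∈ TangentAt X, phi γ h X v ζ ≤ phi γ h X v ζ'

variable {d r : ℕ}

lemma finner_eq_sum (A B : Mat d r) : finner A B = ∑ j, ∑ i, A i j * B i j := by
  simp [finner, Matrix.trace, Matrix.mul_apply, Matrix.diag, Matrix.transpose_apply]

lemma norm_sq_finner (A : Mat d r) : ‖A‖ ^ 2 = finner A A := by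
  rw [finner_eq_sum, Matrix.frobenius_norm_def]
  rw [← Real.rpow_natCast (_ ^ (1/2:ℝ)) 2, ← Real.rpow_mul (by positivity)]
  norm_num
  rw [Finset.sum_comm]
  congr 1; ext j; congr 1; ext i
  ring

lemma finner_comm (A B : Mat d r) : finner A B = finner B A := by
  simp [finner_eq_sum, mul_comm]

lemma finner_add_left (A B C : Mat d r) : finner (A + B) C = finner A C + finner B C := by
  simp [finner_eq_sum, add_mul, Finset.sum_add_distrib]

lemma finner_add_right (A B C : Mat d r) : finner A (B + C) = finner A B + finner A C := by
  simp [finner_eq_sum, mul_add, Finset.sum_add_distrib]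

lemma finner_smul_left (c : ℝ) (A B : Mat d r) : finner (c • A) B = c * finner A B := by
  simp [finner_eq_sum, Finset.mul_sum, Matrix.smul_apply, mul_assoc]

lemma finner_smul_right (c : ℝ) (A B : Mat d r) : finner A (c • B) = c * finner A B := by
  rw [finner_comm, finner_smul_left, finner_comm]

lemma finner_sub_left (A B C : Mat d r) : finner (A - B) C = finner A C - finner B C := by
  simp [finner_eq_sum, sub_mul, Finset.sum_sub_distrib]

lemma finner_sub_right (A B C : Mat d r) : finner A (B - C) = finner A B - finner A C := by
  rw [finner_comm, finner_sub_left, finner_comm C A, finner_comm B A]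

lemma finner_self_nonneg (A : Mat d r) : 0 ≤ finner A A := by
  rw [← norm_sq_finner]; positivity

lemma finner_le_norm (A B : Mat d r) : finner A B ≤ ‖A‖ * ‖B‖ := by
  rcases eq_or_ne A 0 with rfl | hA
  · simp [finner_eq_sum]
  · have hn : 0 < ‖A‖ := norm_pos_iff.mpr hA
    have key : 0 ≤ finner ((finner A B / ‖A‖^2) • A - B) ((finner A B / ‖A‖^2) • A - B) :=
      finner_self_nonneg _
    rw [finner_sub_left, finner_sub_right, finner_sub_right, finner_smul_left,
      finner_smul_left, finner_smul_right, finner_smul_right, ← norm_sq_finner,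
      finner_comm B A] at key
    have h2 : finner A B ^ 2 ≤ ‖A‖^2 * ‖B‖^2 := by
      rw [norm_sq_finner B]
      have hA2 : (0:ℝ) < ‖A‖^2 := by positivity
      have h := mul_le_mul_of_nonneg_right key (le_of_lt hA2)
      rw [zero_mul] at h
      field_simp at h
      nlinarith [h, hA2]
    nlinarith [h2, mul_nonneg (norm_nonneg A) (norm_nonneg B)]

lemma finner_neg_right (A B : Mat d r) : finner A (-B) = - finner A B := by
  simp [finner_eq_sum, Finset.sum_neg_distrib]

lemma tangent_zero (X : Mat d r) : 0 ∈ TangentAt X := by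
  simp [TangentAt]

lemma tangent_smul {X ζ : Mat d r} (c : ℝ) (hζ : ζ ∈ TangentAt X) : c • ζ ∈ TangentAt X := by
  simp only [TangentAt, Set.mem_setOf_eq] at *
  rw [Matrix.transpose_smul, Matrix.smul_mul, Matrix.mul_smul, ← smul_add, hζ, smul_zero]

lemma tangent_combo {X a b : Mat d r} (ha : a ∈ TangentAt X) (hb : b ∈ TangentAt X)
    (s : ℝ) : a + s • (b - a) ∈ TangentAt X := by
  simp only [TangentAt, Set.mem_setOf_eq] at *
  have key : (a + s • (b - a))ᵀ * X + Xᵀ * (a + s • (b - a)) =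
      (aᵀ * X + Xᵀ * a) + s • ((bᵀ * X + Xᵀ * b) - (aᵀ * X + Xᵀ * a)) := by
    rw [Matrix.transpose_add, Matrix.transpose_smul, Matrix.transpose_sub,
      Matrix.add_mul, Matrix.smul_mul, Matrix.sub_mul, Matrix.mul_add, Matrix.mul_smul,
      Matrix.mul_sub, smul_sub, smul_sub]
    module
  rw [key, ha, hb]
  simp

lemma small_s_nonneg {A B : ℝ} (hB : 0 ≤ B) (h : ∀ s : ℝ, 0 < s → s ≤ 1 → 0 ≤ A + s * B) :
    0 ≤ A := by
  by_contra hA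
  push_neg at hA
  set s := min 1 ((-A) / (B + 1)) with hs
  have hs0 : 0 < s := lt_min one_pos (div_pos (neg_pos.mpr hA) (by linarith))
  have hs1 : s ≤ 1 := min_le_left _ _
  have h1 := h s hs0 hs1
  have h2 : s * B ≤ ((-A) / (B + 1)) * B :=
    mul_le_mul_of_nonneg_right (min_le_right _ _) hB
  have h3 : ((-A) / (B + 1)) * B < -A := by
    rw [div_mul_eq_mul_div, div_lt_iff₀ (by linarith : (0:ℝ) < B + 1)]
    nlinarith
  linarith

lemma submin_vi {γ : ℝ} (hγ : 0 < γ) {h : Mat d r → ℝ} (hconv : ConvexOn ℝ Set.univ h)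
    {X v a : Mat d r} (hmin : IsSubMin γ h X v a) {b : Mat d r} (hb : b ∈ TangentAt X) :
    0 ≤ finner v (b - a) + (1 / γ) * finner a (b - a) + (h (X + b) - h (X + a)) := by
  obtain ⟨haT, hle⟩ := hmin
  set u := b - a with hu
  have hB : 0 ≤ (1 / (2 * γ)) * finner u u := by
    have := finner_self_nonneg u
    have : (0:ℝ) < 1 / (2 * γ) := by positivity
    nlinarith [finner_self_nonneg u]
  apply small_s_nonneg hB
  intro s hs0 hs1
  have hc := hle (a + s • u) (tangent_combo haT hb s)
  have e1 : finner v (a + s • u) = finner v a + s * finner v u := by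
    rw [finner_add_right, finner_smul_right]
  have e2 : ‖a + s • u‖ ^ 2 = ‖a‖ ^ 2 + 2 * s * finner a u + s ^ 2 * finner u u := by
    rw [norm_sq_finner, norm_sq_finner, finner_add_right, finner_add_left, finner_add_left,
      finner_smul_right, finner_smul_left, finner_smul_left, finner_smul_right,
      finner_comm u a]
    ring
  have e3 : h (X + (a + s • u)) ≤ h (X + a) + s * (h (X + b) - h (X + a)) := by
    have hcv := hconv.2 (Set.mem_univ (X + a)) (Set.mem_univ (X + b))
      (by linarith : (0:ℝ) ≤ 1 - s) (le_of_lt hs0) (by ring)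
    have heq : (1 - s) • (X + a) + s • (X + b) = X + (a + s • u) := by
      rw [hu]; module
    rw [heq] at hcv
    simp only [smul_eq_mul] at hcv
    nlinarith [hcv]
  have hγγ : 1 / γ = 2 * (1 / (2 * γ)) := by field_simp
  simp only [phi] at hc
  rw [e1, e2] at hc
  have step : 0 ≤ s * ((finner v u + (1 / γ) * finner a u + (h (X + b) - h (X + a)))
      + s * ((1 / (2 * γ)) * finner u u)) := by
    have expand : s * ((finner v u + (1 / γ) * finner a u + (h (X + b) - h (X + a)))
        + s * ((1 / (2 * γ)) * finner u u)) =
        (finner v a + s * finner v u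
          + (1 / (2 * γ)) * (‖a‖ ^ 2 + 2 * s * finner a u + s ^ 2 * finner u u)
          + (h (X + a) + s * (h (X + b) - h (X + a))))
        - (finner v a + (1 / (2 * γ)) * ‖a‖ ^ 2 + h (X + a)) := by
      rw [hγγ]; ring
    rw [expand]; linarith
  nlinarith [step, hs0]

lemma submin_descent {γ : ℝ} (hγ : 0 < γ) {h : Mat d r → ℝ} (hconv : ConvexOn ℝ Set.univ h)
    {X v a : Mat d r} (hmin : IsSubMin γ h X v a) :
    finner v a + (1 / γ) * ‖a‖ ^ 2 + h (X + a) ≤ h X := by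
  have hvi := submin_vi hγ hconv hmin (tangent_zero X)
  have e0 : (0:Mat d r) - a = -a := by simp
  rw [e0, finner_neg_right, finner_neg_right, add_zero] at hvi
  rw [norm_sq_finner]
  linarith

lemma submin_dist {γ : ℝ} (hγ : 0 < γ) {h : Mat d r → ℝ} (hconv : ConvexOn ℝ Set.univ h)
    {X v g a b : Mat d r} (hva : IsSubMin γ h X v a) (hgb : IsSubMin γ h X g b) :
    ‖a - b‖ ≤ γ * ‖v - g‖ := by
  have h1 := submin_vi hγ hconv hva hgb.1
  have h2 := submin_vi hγ hconv hgb hva.1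
  have ea : a - b = -(b - a) := by module
  rw [ea, finner_neg_right, finner_neg_right] at h2
  have e3 : finner a (b - a) - finner b (b - a) = - finner (b - a) (b - a) := by
    rw [← finner_sub_left, ea, finner_comm, finner_neg_right, finner_comm]
  have enrm : ‖a - b‖ ^ 2 = finner (b - a) (b - a) := by
    rw [norm_sq_finner, ea, finner_comm, finner_neg_right, finner_comm, finner_neg_right]
    ring
  have key : (1 / γ) * ‖a - b‖ ^ 2 ≤ finner (v - g) (b - a) := by
    rw [enrm, finner_sub_left, finner_sub_left]
    linarith
  have cs : finner (v - g) (b - a) ≤ ‖v - g‖ * ‖a - b‖ := by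
    rw [show ‖a - b‖ = ‖b - a‖ from norm_sub_rev a b]
    exact finner_le_norm _ _
  rcases eq_or_lt_of_le (norm_nonneg (a - b)) with hz | hz
  · rw [← hz]; positivity
  · have h3 : (1 / γ) * ‖a - b‖ ^ 2 ≤ ‖v - g‖ * ‖a - b‖ := le_trans key cs
    rw [div_mul_eq_mul_div, one_mul, div_le_iff₀ hγ] at h3
    have h4 := mul_le_mul_of_nonneg_right h3 (le_of_lt (by positivity : (0:ℝ) < (‖a - b‖)⁻¹))
    calc ‖a - b‖ = ‖a - b‖ ^ 2 * (‖a - b‖)⁻¹ := by field_simp [pow_two]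
    _ ≤ ‖v - g‖ * ‖a - b‖ * γ * (‖a - b‖)⁻¹ := h4
    _ = γ * ‖v - g‖ := by field_simp

lemma stiefel_polarRetr {X ξ : Mat d r} (hX : Stiefel X) (hξ : ξ ∈ TangentAt X) :
    Stiefel (polarRetr X ξ) := by
  set S := psdSqrt (posSemidef_one_add_transpose_mul_self ξ) with hS
  have hS2 : S * S = 1 + ξᵀ * ξ := psdSqrt_mul_self _
  have hposdef : (1 + ξᵀ * ξ).PosDef := by
    have h := Matrix.posSemidef_conjTranspose_mul_self ξ
    rw [Matrix.conjTranspose_eq_transpose_of_trivial] at h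
    exact Matrix.PosDef.add_posSemidef Matrix.PosDef.one h
  have hdet : S.det ≠ 0 := by
    intro h0
    have := congrArg Matrix.det hS2
    rw [Matrix.det_mul, h0, mul_zero] at this
    exact absurd this.symm (ne_of_gt hposdef.det_pos)
  have hunit : IsUnit S.det := isUnit_iff_ne_zero.mpr hdet
  have hsym : Sᵀ = S := by
    exact psdSqrt_transpose _
  have hcross : (X + ξ)ᵀ * (X + ξ) = S * S := by
    have ht : ξᵀ * X + Xᵀ * ξ = 0 := hξ
    have ht2 : Xᵀ * ξ = -(ξᵀ * X) := eq_neg_of_add_eq_zero_right ht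
    have hX' : Xᵀ * X = 1 := hX
    rw [hS2, Matrix.transpose_add, Matrix.add_mul, Matrix.mul_add, Matrix.mul_add, hX', ht2]
    abel
  show ((X + ξ) * S⁻¹)ᵀ * ((X + ξ) * S⁻¹) = 1
  rw [Matrix.transpose_mul, Matrix.transpose_nonsing_inv, hsym, Matrix.mul_assoc,
    ← Matrix.mul_assoc ((X + ξ)ᵀ), hcross, Matrix.mul_assoc S, Matrix.mul_nonsing_inv S hunit,
    Matrix.mul_one, Matrix.nonsing_inv_mul S hunit]

lemma pointwise_descent {γ η L_R L_h M₂ : ℝ} (hη0 : 0 < η) (hη1 : η ≤ 1) (hγ0 : 0 < γ)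
    (hηγ : η * (1 / γ) = (L_R / 2 + L_h * M₂) * η ^ 2 + η / 2 + 1 / 2)
    (hLh : 0 < L_h) {f h : Mat d r → ℝ} (hconv : ConvexOn ℝ Set.univ h)
    (hlip : ∀ A B : Mat d r, |h A - h B| ≤ L_h * ‖A - B‖)
    {Xt Xt1 vt ζt g : Mat d r}
    (hζmin : IsSubMin γ h Xt vt ζt)
    (hfdesc : f Xt1 ≤ f Xt + η * finner g ζt + (L_R * η ^ 2 / 2) * ‖ζt‖ ^ 2)
    (hM2b : ‖Xt1 - (Xt + η • ζt)‖ ≤ M₂ * η ^ 2 * ‖ζt‖ ^ 2) :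
    f Xt1 + h Xt1 + (1 / 2) * ‖ζt‖ ^ 2 ≤ f Xt + h Xt + (η / 2) * ‖vt - g‖ ^ 2 := by
  have hdes := submin_descent hγ0 hconv hζmin
  -- convexity
  have hcvx : h (Xt + η • ζt) ≤ (1 - η) * h Xt + η * h (Xt + ζt) := by
    have hcv := hconv.2 (Set.mem_univ Xt) (Set.mem_univ (Xt + ζt))
      (by linarith : (0:ℝ) ≤ 1 - η) (le_of_lt hη0) (by ring)
    have heq : (1 - η) • Xt + η • (Xt + ζt) = Xt + η • ζt := by module
    rw [heq] at hcv
    simpa [smul_eq_mul] using hcv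
  -- Lipschitz + M2
  have hlip2 : h Xt1 ≤ h (Xt + η • ζt) + L_h * (M₂ * η ^ 2 * ‖ζt‖ ^ 2) := by
    have h1 := hlip Xt1 (Xt + η • ζt)
    have h2 := mul_le_mul_of_nonneg_left hM2b (le_of_lt hLh)
    have h3 := le_trans (le_abs_self _) h1
    linarith
  -- Young
  have hyoung : finner g ζt - finner vt ζt ≤ (1 / 2) * ‖vt - g‖ ^ 2 + (1 / 2) * ‖ζt‖ ^ 2 := by
    rw [← finner_sub_left]
    have h1 := finner_le_norm (g - vt) ζt
    rw [show ‖g - vt‖ = ‖vt - g‖ from norm_sub_rev g vt] at h1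
    nlinarith [sq_nonneg (‖vt - g‖ - ‖ζt‖)]
  -- multiply by η
  have hdesη := mul_le_mul_of_nonneg_left hdes (le_of_lt hη0)
  have hyoungη := mul_le_mul_of_nonneg_left hyoung (le_of_lt hη0)
  have hcoef : η * ((1 / γ) * ‖ζt‖ ^ 2) =
      ((L_R / 2 + L_h * M₂) * η ^ 2 + η / 2 + 1 / 2) * ‖ζt‖ ^ 2 := by
    rw [← hηγ]; ring
  nlinarith [hdesη, hyoungη, hcvx, hlip2, hfdesc, hcoef]

lemma pointwise_G {γ M₁ : ℝ} (hγ0 : 0 < γ) (hM₁ : 0 < M₁) {h : Mat d r → ℝ}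
    (hconv : ConvexOn ℝ Set.univ h) {Xt vt ζt ξt g Gt : Mat d r}
    (hζmin : IsSubMin γ h Xt vt ζt) (hξmin : IsSubMin γ h Xt g ξt)
    (hretr : ∀ χ ∈ TangentAt Xt, ‖polarRetr Xt χ - Xt‖ ≤ M₁ * ‖χ‖)
    (hGt : Gt = (1 / γ) • (Xt - polarRetr Xt (γ • ξt))) :
    ‖Gt‖ ^ 2 ≤ 2 * M₁ ^ 2 * ‖ζt‖ ^ 2 + 2 * M₁ ^ 2 * γ ^ 2 * ‖vt - g‖ ^ 2 := by
  have hGn : ‖Gt‖ ≤ M₁ * ‖ξt‖ := by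
    rw [hGt, norm_smul]
    have h1 : ‖Xt - polarRetr Xt (γ • ξt)‖ = ‖polarRetr Xt (γ • ξt) - Xt‖ :=
      norm_sub_rev _ _
    have h2 := hretr (γ • ξt) (tangent_smul γ hξmin.1)
    rw [norm_smul] at h2
    have h3 : ‖(1 / γ)‖ = 1 / γ := by
      rw [Real.norm_eq_abs, abs_of_pos (by positivity)]
    rw [h3, h1]
    calc (1 / γ) * ‖polarRetr Xt (γ • ξt) - Xt‖ ≤ (1 / γ) * (M₁ * (‖γ‖ * ‖ξt‖)) := by
          apply mul_le_mul_of_nonneg_left h2 (by positivity)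
    _ = M₁ * ‖ξt‖ := by
          rw [Real.norm_eq_abs, abs_of_pos hγ0]; field_simp
  have hdist : ‖ξt - ζt‖ ≤ γ * ‖g - vt‖ := submin_dist hγ0 hconv hξmin hζmin
  have hξn : ‖ξt‖ ≤ ‖ζt‖ + γ * ‖vt - g‖ := by
    have h1 : ‖ξt‖ ≤ ‖ζt‖ + ‖ξt - ζt‖ := by
      have := norm_add_le ζt (ξt - ζt)
      simpa using this
    rw [show ‖g - vt‖ = ‖vt - g‖ from norm_sub_rev g vt] at hdist
    linarith
  have hG0 : 0 ≤ ‖Gt‖ := norm_nonneg _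
  have p1 : ‖Gt‖ * ‖Gt‖ ≤ (M₁ * ‖ξt‖) * (M₁ * ‖ξt‖) := mul_le_mul hGn hGn hG0 (by positivity)
  have p2 : ‖ξt‖ * ‖ξt‖ ≤ (‖ζt‖ + γ * ‖vt - g‖) * (‖ζt‖ + γ * ‖vt - g‖) :=
    mul_le_mul hξn hξn (norm_nonneg ξt) (by positivity)
  nlinarith [p1, p2, sq_nonneg (‖ζt‖ - γ * ‖vt - g‖), sq_nonneg M₁,
    mul_le_mul_of_nonneg_left p2 (sq_nonneg M₁)]

set_option maxHeartbeats 1000000 in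
/-- convergence of R-ProxSGD:
`(1/T)∑_{t<T} E[‖G_t‖²] ≤ 14M₁²(2Δ₀/(Tη) + σ²η/s) + 8M₁²γσ²/s`. -/
theorem RProxSGD_convergence {d r : ℕ}
    {Ω : Type*} [MeasurableSpace Ω] (P : Measure Ω) [IsProbabilityMeasure P]
    (T : ℕ) (hT : 1 ≤ T)
    (γ η L_R L_h M₁ M₂ σ s Fstar Δ₀ : ℝ)
    (hη0 : 0 < η) (hη1 : η ≤ 1)
    (hγ : γ = 2 * η / (2 * (L_R / 2 + L_h * M₂) * η ^ 2 + η + 1))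
    (hLR : 0 < L_R) (hLh : 0 < L_h) (hM₁ : 0 < M₁) (hM₂ : 0 < M₂)
    (hσ : 0 ≤ σ) (hs : 0 < s)
    (f h : Mat d r → ℝ)
    (hconv : ConvexOn ℝ Set.univ h)
    (hlip : ∀ A B : Mat d r, |h A - h B| ≤ L_h * ‖A - B‖)
    (hdiff : Differentiable ℝ f)
    (Gf : Mat d r → Mat d r)
    (hgrad : ∀ Y u : Mat d r, (fderiv ℝ f Y) u = finner (Gf Y) u)
    (hFlb : ∀ Y : Mat d r, Stiefel Y → Fstar ≤ f Y + h Y)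
    (X0 : Mat d r) (hX0S : Stiefel X0)
    (hΔ₀ : Δ₀ = (f X0 + h X0) - Fstar)
    (X v ζ ξ : ℕ → Ω → Mat d r)
    (hX0 : ∀ ω, X 0 ω = X0)
    (has : ∀ᵐ ω ∂P, ∀ t < T,
      Stiefel (X t ω) ∧
      IsSubMin γ h (X t ω) (v t ω) (ζ t ω) ∧
      X (t + 1) ω = polarRetr (X t ω) (η • ζ t ω) ∧
      f (X (t + 1) ω) ≤
        f (X t ω) + η * finner (Gf (X t ω)) (ζ t ω) + (L_R * η ^ 2 / 2) * ‖ζ t ω‖ ^ 2 ∧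
      ‖X (t + 1) ω - (X t ω + η • ζ t ω)‖ ≤ M₂ * η ^ 2 * ‖ζ t ω‖ ^ 2 ∧
      (∀ χ ∈ TangentAt (X t ω), ‖polarRetr (X t ω) χ - X t ω‖ ≤ M₁ * ‖χ‖) ∧
      IsSubMin γ h (X t ω) (Gf (X t ω)) (ξ t ω))
    (G : ℕ → Ω → Mat d r)
    (hG : ∀ t ω, G t ω = (1 / γ) • (X t ω - polarRetr (X t ω) (γ • ξ t ω)))
    (hintF : ∀ t ≤ T, Integrable (fun ω => f (X t ω) + h (X t ω)) P)
    (hintζ : ∀ t < T, Integrable (fun ω => ‖ζ t ω‖ ^ 2) P)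
    (hintv : ∀ t < T, Integrable (fun ω => ‖v t ω - Gf (X t ω)‖ ^ 2) P)
    (hintG : ∀ t < T, Integrable (fun ω => ‖G t ω‖ ^ 2) P)
    (hvar : ∀ t < T, ∫ ω, ‖v t ω - Gf (X t ω)‖ ^ 2 ∂P ≤ σ ^ 2 / s)
    :
    (1 / (T : ℝ)) * ∑ t ∈ Finset.range T, ∫ ω, ‖G t ω‖ ^ 2 ∂P ≤
      14 * M₁ ^ 2 * (2 * Δ₀ / ((T : ℝ) * η) + σ ^ 2 * η / s) + 8 * M₁ ^ 2 * γ * σ ^ 2 / s := by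
  have hL : (0:ℝ) < L_R / 2 + L_h * M₂ := by positivity
  have hden : (0:ℝ) < 2 * (L_R / 2 + L_h * M₂) * η ^ 2 + η + 1 := by positivity
  have hγ0 : 0 < γ := by rw [hγ]; positivity
  have hγ1 : γ ≤ 1 := by
    rw [hγ, div_le_one hden]; nlinarith
  have hηγ : η * (1 / γ) = (L_R / 2 + L_h * M₂) * η ^ 2 + η / 2 + 1 / 2 := by
    rw [hγ]; field_simp
  have hq0 : (0:ℝ) ≤ σ ^ 2 / s := by positivity
  -- a.e. Stiefel at time T
  have hST : ∀ᵐ ω ∂P, Stiefel (X T ω) := by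
    filter_upwards [has] with ω hω
    obtain ⟨hSt, hζmin, hXrec, -, -, -, -⟩ := hω (T - 1) (by omega)
    have hTT : T - 1 + 1 = T := by omega
    rw [hTT] at hXrec
    rw [hXrec]
    exact stiefel_polarRetr hSt (tangent_smul η hζmin.1)
  -- per-step descent at the level of integrals
  have hstep : ∀ t < T, (∫ ω, (f (X (t+1) ω) + h (X (t+1) ω)) ∂P) ≤
      (∫ ω, (f (X t ω) + h (X t ω)) ∂P) - (1/2) * (∫ ω, ‖ζ t ω‖^2 ∂P) + (η/2) * (σ^2/s) := by
    intro t ht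
    have hpt : ∀ᵐ ω ∂P, (f (X (t+1) ω) + h (X (t+1) ω)) ≤
        (f (X t ω) + h (X t ω)) - (1/2) * ‖ζ t ω‖^2 + (η/2) * ‖v t ω - Gf (X t ω)‖^2 := by
      filter_upwards [has] with ω hω
      obtain ⟨hSt, hζmin, hXrec, hfdesc, hM2b, hretr, hξmin⟩ := hω t ht
      have := pointwise_descent hη0 hη1 hγ0 hηγ hLh hconv hlip hζmin hfdesc hM2b
      linarith
    have hIa : Integrable (fun ω => f (X t ω) + h (X t ω) - 1/2 * ‖ζ t ω‖^2) P :=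
      (hintF t (by omega)).sub ((hintζ t ht).const_mul (1/2))
    have hIb : Integrable (fun ω => η/2 * ‖v t ω - Gf (X t ω)‖^2) P :=
      (hintv t ht).const_mul (η/2)
    have hIc : Integrable (fun ω => f (X t ω) + h (X t ω) - 1/2 * ‖ζ t ω‖^2
        + η/2 * ‖v t ω - Gf (X t ω)‖^2) P := hIa.add hIb
    have hmono := integral_mono_ae (hintF (t+1) (by omega)) hIc hpt
    rw [integral_add hIa hIb,
      integral_sub (hintF t (by omega)) ((hintζ t ht).const_mul (1/2)),
      integral_const_mul, integral_const_mul] at hmono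
    have hv := mul_le_mul_of_nonneg_left (hvar t ht) (by positivity : (0:ℝ) ≤ η/2)
    linarith
  -- per-step bound on the gradient mapping
  have hGstep : ∀ t < T, (∫ ω, ‖G t ω‖^2 ∂P) ≤
      2*M₁^2*(∫ ω, ‖ζ t ω‖^2 ∂P) + 2*M₁^2*γ^2*(σ^2/s) := by
    intro t ht
    have hpt : ∀ᵐ ω ∂P, ‖G t ω‖^2 ≤
        2*M₁^2 * ‖ζ t ω‖^2 + 2*M₁^2*γ^2 * ‖v t ω - Gf (X t ω)‖^2 := by
      filter_upwards [has] with ω hω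
      obtain ⟨hSt, hζmin, hXrec, hfdesc, hM2b, hretr, hξmin⟩ := hω t ht
      exact pointwise_G hγ0 hM₁ hconv hζmin hξmin hretr (hG t ω)
    have hIa : Integrable (fun ω => 2*M₁^2 * ‖ζ t ω‖^2) P := (hintζ t ht).const_mul (2*M₁^2)
    have hIb : Integrable (fun ω => 2*M₁^2*γ^2 * ‖v t ω - Gf (X t ω)‖^2) P :=
      (hintv t ht).const_mul (2*M₁^2*γ^2)
    have hIc : Integrable (fun ω => 2*M₁^2 * ‖ζ t ω‖^2
        + 2*M₁^2*γ^2 * ‖v t ω - Gf (X t ω)‖^2) P := hIa.add hIb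
    have hmono := integral_mono_ae (hintG t ht) hIc hpt
    rw [integral_add hIa hIb, integral_const_mul, integral_const_mul] at hmono
    have hv := mul_le_mul_of_nonneg_left (hvar t ht) (by positivity : (0:ℝ) ≤ 2*M₁^2*γ^2)
    linarith
  -- value at time 0 and lower bound at time T
  have hF0 : (∫ ω, (f (X 0 ω) + h (X 0 ω)) ∂P) = f X0 + h X0 := by
    simp [hX0]
  have hFT : Fstar ≤ ∫ ω, (f (X T ω) + h (X T ω)) ∂P := by
    have hpt : ∀ᵐ ω ∂P, Fstar ≤ f (X T ω) + h (X T ω) := by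
      filter_upwards [hST] with ω hs
      exact hFlb _ hs
    have := integral_mono_ae (integrable_const Fstar) (hintF T le_rfl) hpt
    simpa using this
  have hΔ0 : 0 ≤ Δ₀ := by
    rw [hΔ₀]; linarith [hFlb X0 hX0S]
  -- telescoping
  have tele : ∑ t ∈ Finset.range T,
      ((∫ ω, (f (X t ω) + h (X t ω)) ∂P) - (∫ ω, (f (X (t+1) ω) + h (X (t+1) ω)) ∂P)) =
      (∫ ω, (f (X 0 ω) + h (X 0 ω)) ∂P) - (∫ ω, (f (X T ω) + h (X T ω)) ∂P) :=
    Finset.sum_range_sub' (fun t => ∫ ω, (f (X t ω) + h (X t ω)) ∂P) T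
  have hsumζ : ∑ t ∈ Finset.range T, (∫ ω, ‖ζ t ω‖^2 ∂P) ≤ 2*Δ₀ + T*η*(σ^2/s) := by
    have h1 : ∀ t ∈ Finset.range T, (1/2) * (∫ ω, ‖ζ t ω‖^2 ∂P) ≤
        ((∫ ω, (f (X t ω) + h (X t ω)) ∂P) - (∫ ω, (f (X (t+1) ω) + h (X (t+1) ω)) ∂P))
          + (η/2)*(σ^2/s) := by
      intro t ht'
      have := hstep t (Finset.mem_range.mp ht')
      linarith
    have h2 := Finset.sum_le_sum h1
    rw [Finset.sum_add_distrib, Finset.sum_const, Finset.card_range, tele, ← Finset.mul_sum] at h2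
    simp only [nsmul_eq_mul] at h2
    have hend : (∫ ω, (f (X 0 ω) + h (X 0 ω)) ∂P) - (∫ ω, (f (X T ω) + h (X T ω)) ∂P) ≤ Δ₀ := by
      rw [hF0, hΔ₀]; linarith
    linarith
  have hsumG : ∑ t ∈ Finset.range T, (∫ ω, ‖G t ω‖^2 ∂P) ≤
      2*M₁^2*(2*Δ₀ + T*η*(σ^2/s)) + T*(2*M₁^2*γ^2*(σ^2/s)) := by
    have h1 := Finset.sum_le_sum (fun t ht' => hGstep t (Finset.mem_range.mp ht'))
    rw [Finset.sum_add_distrib, ← Finset.mul_sum, Finset.sum_const, Finset.card_range,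
      nsmul_eq_mul] at h1
    have h2 := mul_le_mul_of_nonneg_left hsumζ (by positivity : (0:ℝ) ≤ 2*M₁^2)
    linarith
  -- final arithmetic
  have hT1 : (1:ℝ) ≤ (T:ℝ) := by exact_mod_cast hT
  have hT0 : (0:ℝ) < (T:ℝ) := by linarith
  have hbound := mul_le_mul_of_nonneg_left hsumG (by positivity : (0:ℝ) ≤ 1/(T:ℝ))
  refine le_trans hbound ?_
  have e1 : (1/(T:ℝ)) * (2*M₁^2*(2*Δ₀ + T*η*(σ^2/s)) + T*(2*M₁^2*γ^2*(σ^2/s))) =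
      4*M₁^2*(Δ₀/(T:ℝ)) + 2*M₁^2*η*(σ^2/s) + 2*M₁^2*γ^2*(σ^2/s) := by
    field_simp; ring
  have e2 : 14 * M₁ ^ 2 * (2 * Δ₀ / ((T:ℝ) * η) + σ ^ 2 * η / s) + 8 * M₁ ^ 2 * γ * σ ^ 2 / s =
      28*M₁^2*(Δ₀/((T:ℝ)*η)) + 14*M₁^2*η*(σ^2/s) + 8*M₁^2*γ*(σ^2/s) := by
    ring
  rw [e1, e2]
  have hd1 : Δ₀ / (T:ℝ) ≤ Δ₀ / ((T:ℝ)*η) := by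
    apply div_le_div_of_nonneg_left hΔ0 (by positivity)
    nlinarith
  have hγsq : γ^2 ≤ γ := by nlinarith
  have b1 : 4*M₁^2*(Δ₀/(T:ℝ)) ≤ 4*M₁^2*(Δ₀/((T:ℝ)*η)) :=
    mul_le_mul_of_nonneg_left hd1 (by positivity)
  have b2 : 4*M₁^2*(Δ₀/((T:ℝ)*η)) ≤ 28*M₁^2*(Δ₀/((T:ℝ)*η)) := by
    nlinarith [div_nonneg hΔ0 (by positivity : (0:ℝ) ≤ (T:ℝ)*η), sq_nonneg M₁]
  have b3 : 2*M₁^2*η*(σ^2/s) ≤ 14*M₁^2*η*(σ^2/s) := by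
    nlinarith [mul_nonneg (mul_nonneg (sq_nonneg M₁) hη0.le) hq0]
  have b4 : 2*M₁^2*γ^2*(σ^2/s) ≤ 8*M₁^2*γ*(σ^2/s) := by
    nlinarith [mul_nonneg (sq_nonneg M₁) hq0, sub_nonneg.mpr hγsq,
      mul_nonneg (mul_nonneg (sq_nonneg M₁) hγ0.le) hq0]
  linarith
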